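/- Let X be an A–B imprimitivity bimodule, let π ∈ B̂, and let (π_α) be a net in B̂ such that π is a cluster point of (π_α). Then M_U(π,(π_α)) = M_U(X-Ind π, (X-Ind π_α)). -/

import Mathlib

noncomputable section

open scoped ComplexInnerProductSpace ENNReal

/-- A bundled complex Hilbert space. -/
structure HilbertBundle : Type 1 where
  carrier : Type
  [nacg : NormedAddCommGroup carrier]
  [ips : InnerProductSpace ℂ carrier]
  [cs : CompleteSpace carrier]

attribute [instance] HilbertBundle.nacg HilbertBundle.ips HilbertBundle.cs

/-- A representation of a (possibly non-unital) C⋆-algebra on a Hilbert space, i.e. a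
⋆-homomorphism into the bounded operators. -/
structure CStarRep (B : Type) [NonUnitalCStarAlgebra B] : Type 1 where
  space : HilbertBundle
  π : B →⋆ₙₐ[ℂ] (space.carrier →L[ℂ] space.carrier)

/-- An `A`–`B` imprimitivity bimodule: a complex vector space `X` which is a full left Hilbert
`A`-module and a full right Hilbert `B`-module, with commuting actions, satisfying
`⟨x,y⟩_A ⬝ z = x ⬝ ⟨y,z⟩_B`.  The `A`-valued inner product is linear in the first variable and
the `B`-valued one in the second.  `X` is complete for the norm `‖x‖ = ‖⟨x,x⟩_B‖^{1/2}`
(which coincides with `‖⟨x,x⟩_A‖^{1/2}`). -/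
structure ImprimitivityBimodule (A B : Type) [NonUnitalCStarAlgebra A]
    [NonUnitalCStarAlgebra B] : Type 1 where
  X : Type
  [nacg : NormedAddCommGroup X]
  [nsp : NormedSpace ℂ X]
  [cs : CompleteSpace X]
  smulA : A → X → X
  smulB : X → B → X
  innA : X → X → A
  innB : X → X → B
  -- `X` is a left `A`-module
  smulA_add : ∀ a x y, smulA a (x + y) = smulA a x + smulA a y
  add_smulA : ∀ a a' x, smulA (a + a') x = smulA a x + smulA a' x
  mul_smulA : ∀ a a' x, smulA (a * a') x = smulA a (smulA a' x)
  smulA_smul : ∀ (c : ℂ) a x, smulA (c • a) x = c • smulA a x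
  smulA_smul' : ∀ (c : ℂ) a x, smulA a (c • x) = c • smulA a x
  -- `X` is a right `B`-module
  smulB_add : ∀ x y b, smulB (x + y) b = smulB x b + smulB y b
  smulB_add' : ∀ x b b', smulB x (b + b') = smulB x b + smulB x b'
  smulB_mul : ∀ x b b', smulB x (b * b') = smulB (smulB x b) b'
  smulB_smul : ∀ (c : ℂ) x b, smulB x (c • b) = c • smulB x b
  smulB_smul' : ∀ (c : ℂ) x b, smulB (c • x) b = c • smulB x b
  -- the two actions commute
  smul_commutes : ∀ a x b, smulB (smulA a x) b = smulA a (smulB x b)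
  -- the `A`-valued inner product (linear in the first variable)
  innA_add : ∀ x y z, innA (x + y) z = innA x z + innA y z
  innA_add' : ∀ x y z, innA x (y + z) = innA x y + innA x z
  innA_smul : ∀ (c : ℂ) x y, innA (c • x) y = c • innA x y
  innA_star : ∀ x y, star (innA x y) = innA y x
  innA_smulA : ∀ a x y, innA (smulA a x) y = a * innA x y
  innA_pos : ∀ x, ∃ a, innA x x = star a * a
  innA_definite : ∀ x, innA x x = 0 → x = 0
  -- the `B`-valued inner product (linear in the second variable)
  innB_add : ∀ x y z, innB (x + y) z = innB x z + innB y z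
  innB_add' : ∀ x y z, innB x (y + z) = innB x y + innB x z
  innB_smul : ∀ (c : ℂ) x y, innB x (c • y) = c • innB x y
  innB_star : ∀ x y, star (innB x y) = innB y x
  innB_smulB : ∀ x y b, innB x (smulB y b) = innB x y * b
  innB_pos : ∀ x, ∃ b, innB x x = star b * b
  innB_definite : ∀ x, innB x x = 0 → x = 0
  -- the norm on `X` is the Hilbert-module norm for both inner products
  norm_innA : ∀ x, ‖x‖ ^ 2 = ‖innA x x‖
  norm_innB : ∀ x, ‖x‖ ^ 2 = ‖innB x x‖
  -- fullness of both inner products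
  full_innA : closure (Submodule.span ℂ {a : A | ∃ x y, a = innA x y} : Set A) = Set.univ
  full_innB : closure (Submodule.span ℂ {b : B | ∃ x y, b = innB x y} : Set B) = Set.univ
  -- the imprimitivity condition `⟨x,y⟩_A ⬝ z = x ⬝ ⟨y,z⟩_B`
  imprimitivity : ∀ x y z, smulA (innA x y) z = smulB x (innB y z)

attribute [instance] ImprimitivityBimodule.nacg ImprimitivityBimodule.nsp
  ImprimitivityBimodule.cs
/-- A realization of the induced representation `X-Ind π` of `A` on `X ⊗_B H`, given an
`A`–`B` imprimitivity bimodule `X` and a representation `π` of `B` on `H`.  The map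
`t x h = x ⊗ h` is bilinear, `B`-balanced, has dense range span, satisfies the pre-inner
product identity `(x ⊗ h | y ⊗ k) = (π(⟨y,x⟩_B) h | k)` (written below in Mathlib's
convention, where the inner product is conjugate-linear in the first variable), and
intertwines the `A`-actions: `(X-Ind π)(a)(x ⊗ h) = (a⬝x) ⊗ h`. -/
structure InducedRepWitness {A B : Type} [NonUnitalCStarAlgebra A] [NonUnitalCStarAlgebra B]
    (E : ImprimitivityBimodule A B) (ρ : CStarRep B) (ρ' : CStarRep A) : Type 1 where
  t : E.X → ρ.space.carrier → ρ'.space.carrier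
  t_add_left : ∀ x y h, t (x + y) h = t x h + t y h
  t_add_right : ∀ x h k, t x (h + k) = t x h + t x k
  t_smul_left : ∀ (c : ℂ) x h, t (c • x) h = c • t x h
  t_smul_right : ∀ (c : ℂ) x h, t x (c • h) = c • t x h
  t_balanced : ∀ x b h, t (E.smulB x b) h = t x (ρ.π b h)
  t_inner : ∀ x y h k, ⟪t y k, t x h⟫ = ⟪k, ρ.π (E.innB y x) h⟫
  t_dense : closure (Submodule.span ℂ {v : ρ'.space.carrier | ∃ x h, v = t x h} :
      Set ρ'.space.carrier) = Set.univ
  t_intertwine : ∀ a x h, ρ'.π a (t x h) = t (E.smulA a x) h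
/-- (Topological) irreducibility of a representation: it is non-zero and has no non-trivial
closed invariant subspaces. -/
def CStarRep.Irreducible {B : Type} [NonUnitalCStarAlgebra B] (ρ : CStarRep B) : Prop :=
  (∃ b, ρ.π b ≠ 0) ∧
    ∀ K : Submodule ℂ ρ.space.carrier, IsClosed (K : Set ρ.space.carrier) →
      (∀ b, ∀ x ∈ K, ρ.π b x ∈ K) → K = ⊥ ∨ K = ⊤

/-- The irreducible representations of `B`; together with the topology below this serves as
the spectrum `B̂` of `B` (all notions considered here are invariant under unitary
equivalence, so may be computed on representatives). -/
def IrrRep (B : Type) [NonUnitalCStarAlgebra B] : Type 1 := {ρ : CStarRep B // ρ.Irreducible}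

/-- The topology on the spectrum: the pullback along `π ↦ ker π` of the Jacobson (hull-kernel)
topology on `Prim B`; the sets `{π | π(b) ≠ 0}` form a subbasis for it. -/
instance (B : Type) [NonUnitalCStarAlgebra B] : TopologicalSpace (IrrRep B) :=
  TopologicalSpace.generateFrom {U | ∃ b : B, U = {ρ : IrrRep B | ρ.1.π b ≠ 0}}
/-- The rank of a bounded operator, as an element of `{0,1,2,...} ∪ {∞}`. -/
def opRank {H : Type} [NormedAddCommGroup H] [InnerProductSpace ℂ H] (T : H →L[ℂ] H) : ℕ∞ :=
  (Module.rank ℂ (LinearMap.range (T : H →ₗ[ℂ] H))).toENat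

/-- A bundled nonempty directed preorder, the index of a net. -/
structure DirectedIndex : Type 1 where
  ι : Type
  [pre : Preorder ι]
  [dir : IsDirected ι (· ≤ ·)]
  [ne : Nonempty ι]

attribute [instance] DirectedIndex.pre DirectedIndex.dir DirectedIndex.ne

/-- The upper multiplicity `M_U(σ, (σ_α))` of `σ ∈ B̂` relative to a net `(σ_α)` in `B̂`
having `σ` as a cluster point.  It is characterized by: `M_U(σ, (σ_α)) ≤ k` if and only if
there exists `b ∈ B` with `σ(b) ≠ 0` and `rank σ_α(b) ≤ k` eventually. -/
def upperMult {B : Type} [NonUnitalCStarAlgebra B] {ι : Type} [Preorder ι]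
    (σ : IrrRep B) (net : ι → IrrRep B) : ℕ∞ :=
  sInf {k : ℕ∞ | ∃ b : B, σ.1.π b ≠ 0 ∧
    ∀ᶠ α in Filter.atTop, opRank ((net α).1.π b) ≤ k}

/-- The lower multiplicity `M_L(σ, (σ_α))`: the minimum of `M_U(σ, (σ_{α_i}))` over all
subnets `(σ_{α_i})` of `(σ_α)`. -/
def lowerMult {B : Type} [NonUnitalCStarAlgebra B] {ι : Type} [Preorder ι]
    (σ : IrrRep B) (net : ι → IrrRep B) : ℕ∞ :=
  sInf {m : ℕ∞ | ∃ (D : DirectedIndex) (φ : D.ι → ι),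
    Filter.Tendsto φ Filter.atTop Filter.atTop ∧ m = upperMult σ (net ∘ φ)}

/-- Unitary equivalence of representations. -/
def UEquiv {B : Type} [NonUnitalCStarAlgebra B] (ρ₁ ρ₂ : CStarRep B) : Prop :=
  ∃ U : ρ₁.space.carrier ≃ₗᵢ[ℂ] ρ₂.space.carrier, ∀ b x, U (ρ₁.π b x) = ρ₂.π b (U x)

/-- The (absolute) upper multiplicity `M_U(σ)`: the supremum of `M_U(σ, (σ_α))` over all nets
`(σ_α)` in `B̂` converging to `σ`. -/
def upperMultAbs {B : Type} [NonUnitalCStarAlgebra B] (σ : IrrRep B) : ℕ∞ :=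
  sSup {m : ℕ∞ | ∃ (D : DirectedIndex) (net : D.ι → IrrRep B),
    Filter.Tendsto net Filter.atTop (nhds σ) ∧ m = upperMult σ net}

/-- The (absolute) lower multiplicity `M_L(σ)`, defined when the (unitary equivalence class
of) `σ` is not open in `B̂`: the infimum of `M_L(σ, (σ_α))` over all nets `(σ_α)` in
`B̂ \ {σ}` converging to `σ`. -/
def lowerMultAbs {B : Type} [NonUnitalCStarAlgebra B] (σ : IrrRep B) : ℕ∞ :=
  sInf {m : ℕ∞ | ∃ (D : DirectedIndex) (net : D.ι → IrrRep B),
    (∀ α, ¬ UEquiv (net α).1 σ.1) ∧ Filter.Tendsto net Filter.atTop (nhds σ) ∧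
    m = lowerMult σ net}

/-!
With `T_x : H → X ⊗_B H`, `k ↦ x ⊗ k`, the imprimitivity condition factors
`(X-Ind π)(⟨x⬝b, y⟩_A) = T_x π(b) T_y*` and `π(⟨y, a⬝x⟩_B) = T_y* (X-Ind π)(a) T_x`,
so along the whole net the rank on one side is bounded by the rank on the other.
It remains to see that these elements do not vanish: if `π(b) ≠ 0`, fullness of `⟨·,·⟩_B`
and the C⋆-identity give `π(b⟨y,z⟩_B)h ≠ 0`, and nondegeneracy of the irreducible `π`
makes some `T_x` nonzero on that vector; conversely, density of the elementary tensors
makes some `T_y* (X-Ind π)(a) T_x` nonzero when `(X-Ind π)(a) ≠ 0`.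
-/

open scoped CStarAlgebra

section

variable {A B : Type} [NonUnitalCStarAlgebra A] [NonUnitalCStarAlgebra B]

def CStarRep.toContinuousLinearMap (ρ : CStarRep B) :
    B →L[ℂ] (ρ.space.carrier →L[ℂ] ρ.space.carrier) :=
  ⟨ρ.π, map_continuous ρ.π⟩

@[simp] lemma CStarRep.toContinuousLinearMap_apply (ρ : CStarRep B) (b : B) :
    ρ.toContinuousLinearMap b = ρ.π b := rfl

lemma CStarRep.Irreducible.eq_zero_of_forall_π_apply_eq_zero {ρ : CStarRep B}
    (hρ : ρ.Irreducible) {w : ρ.space.carrier} (hw : ∀ c, ρ.π c w = 0) : w = 0 := by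
  let K : Submodule ℂ ρ.space.carrier := ⨅ c, (ρ.π c).ker
  have hK : ∀ v, v ∈ K ↔ ∀ c, ρ.π c v = 0 := by simp [K]
  have hK_closed : IsClosed (K : Set ρ.space.carrier) := by
    rw [Submodule.coe_iInf]; exact isClosed_iInter fun c => (ρ.π c).isClosed_ker
  have hK_inv : ∀ b, ∀ v ∈ K, ρ.π b v ∈ K := fun b v hv => by
    rw [(hK v).1 hv b]; exact K.zero_mem
  rcases hρ.2 K hK_closed hK_inv with hbot | htop
  · simpa [hbot] using (hK w).2 hw
  · obtain ⟨b, hb⟩ := hρ.1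
    exact absurd (ContinuousLinearMap.ext fun v => (hK v).1 (htop ▸ Submodule.mem_top) b) hb

lemma opRank_comp_comp_le {H H' : Type} [NormedAddCommGroup H] [InnerProductSpace ℂ H]
    [NormedAddCommGroup H'] [InnerProductSpace ℂ H']
    (f : H' →L[ℂ] H) (g : H' →L[ℂ] H') (h : H →L[ℂ] H') :
    opRank (f ∘L g ∘L h) ≤ opRank g :=
  Cardinal.toENat.monotone' <|
    (LinearMap.rank_comp_le_right _ (f : H' →ₗ[ℂ] H)).trans (LinearMap.rank_comp_le_left _ _)

lemma upperMult_le_upperMult {ι : Type} [Preorder ι] {σ : IrrRep B} {σs : ι → IrrRep B}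
    {τ : IrrRep A} {τs : ι → IrrRep A}
    (h : ∀ b, σ.1.π b ≠ 0 →
      ∃ a, τ.1.π a ≠ 0 ∧ ∀ α, opRank ((τs α).1.π a) ≤ opRank ((σs α).1.π b)) :
    upperMult τ τs ≤ upperMult σ σs := by
  refine sInf_le_sInf ?_
  rintro k ⟨b, hb, hev⟩
  obtain ⟨a, ha, hrank⟩ := h b hb
  exact ⟨a, ha, hev.mono fun α hα => (hrank α).trans hα⟩

namespace ImprimitivityBimodule

variable (E : ImprimitivityBimodule A B)

lemma eq_zero_of_forall_innB {V : Type} [NormedAddCommGroup V] [NormedSpace ℂ V]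
    (f : B →L[ℂ] V) (h : ∀ x y, f (E.innB x y) = 0) : f = 0 :=
  ContinuousLinearMap.ext_on (dense_iff_closure_eq.2 E.full_innB) (by
    rintro _ ⟨x, y, rfl⟩; exact h x y)

lemma exists_π_mul_innB_ne_zero (ρ : CStarRep B) {b : B} (hb : ρ.π b ≠ 0) :
    ∃ y z, ρ.π (b * E.innB y z) ≠ 0 := by
  by_contra! h
  have hmul : ρ.toContinuousLinearMap ∘L ContinuousLinearMap.mul ℂ B b = 0 :=
    E.eq_zero_of_forall_innB _ h
  have hbb : ρ.π b * star (ρ.π b) = 0 := by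
    simpa [map_star] using congr($hmul (star b))
  exact hb ((CStarRing.mul_star_self_eq_zero_iff _).1 hbb)

end ImprimitivityBimodule

namespace InducedRepWitness

variable {E : ImprimitivityBimodule A B} {ρ : CStarRep B} {ρ' : CStarRep A}
  (W : InducedRepWitness E ρ ρ')

lemma norm_t_le (x : E.X) (k : ρ.space.carrier) :
    ‖W.t x k‖ ≤ √‖ρ.π (E.innB x x)‖ * ‖k‖ := by
  rw [← Real.sqrt_sq (norm_nonneg k), ← Real.sqrt_mul (norm_nonneg _)]
  refine Real.le_sqrt_of_sq_le ?_
  calc ‖W.t x k‖ ^ 2 = ‖(⟪k, ρ.π (E.innB x x) k⟫ : ℂ)‖ := by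
        rw [← W.t_inner, inner_self_eq_norm_sq_to_K]; simp
    _ ≤ ‖k‖ * (‖ρ.π (E.innB x x)‖ * ‖k‖) :=
        (norm_inner_le_norm _ _).trans (by gcongr; exact (ρ.π _).le_opNorm k)
    _ = ‖ρ.π (E.innB x x)‖ * ‖k‖ ^ 2 := by ring

/-- `k ↦ x ⊗ k`. -/
def tensorLeft (x : E.X) : ρ.space.carrier →L[ℂ] ρ'.space.carrier :=
  LinearMap.mkContinuous ⟨⟨W.t x, W.t_add_right x⟩, fun c k => W.t_smul_right c x k⟩ _
    (W.norm_t_le x)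

@[simp] lemma tensorLeft_apply (x : E.X) (k : ρ.space.carrier) : W.tensorLeft x k = W.t x k :=
  rfl

@[simp] lemma adjoint_tensorLeft_t (y z : E.X) (h : ρ.space.carrier) :
    (W.tensorLeft y).adjoint (W.t z h) = ρ.π (E.innB y z) h :=
  ext_inner_left ℂ fun k => by
    rw [ContinuousLinearMap.adjoint_inner_right, tensorLeft_apply, W.t_inner]

lemma π_innA_smulB (x y : E.X) (b : B) :
    ρ'.π (E.innA (E.smulB x b) y) =
      W.tensorLeft x ∘L ρ.π b ∘L (W.tensorLeft y).adjoint := by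
  refine ContinuousLinearMap.ext_on (dense_iff_closure_eq.2 W.t_dense) ?_
  rintro _ ⟨z, h, rfl⟩
  have hact : E.smulA (E.innA (E.smulB x b) y) z = E.smulB x (b * E.innB y z) := by
    rw [E.imprimitivity, ← E.smulB_mul]
  simp [W.t_intertwine, hact, W.t_balanced]

lemma π_innB_smulA (x y : E.X) (a : A) :
    ρ.π (E.innB y (E.smulA a x)) =
      (W.tensorLeft y).adjoint ∘L ρ'.π a ∘L W.tensorLeft x :=
  ContinuousLinearMap.ext fun h => ext_inner_left ℂ fun k => by
    simp [W.t_intertwine]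

lemma exists_adjoint_tensorLeft_ne_zero {v : ρ'.space.carrier} (hv : v ≠ 0) :
    ∃ y, (W.tensorLeft y).adjoint v ≠ 0 := by
  by_contra! h
  have hperp : innerSL ℂ v = 0 :=
    ContinuousLinearMap.ext_on (dense_iff_closure_eq.2 W.t_dense) (by
      rintro _ ⟨y, k, rfl⟩
      simp [← tensorLeft_apply, ← ContinuousLinearMap.adjoint_inner_left, h])
  exact hv (inner_self_eq_zero.1 congr($hperp v))

lemma exists_t_ne_zero (hρ : ρ.Irreducible) {w : ρ.space.carrier} (hw : w ≠ 0) :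
    ∃ x, W.t x w ≠ 0 := by
  by_contra! h
  refine hw (hρ.eq_zero_of_forall_π_apply_eq_zero fun c => ?_)
  have hinn : (ContinuousLinearMap.apply ℂ _ w) ∘L ρ.toContinuousLinearMap = 0 :=
    E.eq_zero_of_forall_innB _ fun x y => by simp [← W.adjoint_tensorLeft_t, h]
  simpa using congr($hinn c)

lemma exists_π_innA_smulB_ne_zero (W : InducedRepWitness E ρ ρ') (hρ : ρ.Irreducible) {b : B}
    (hb : ρ.π b ≠ 0) :
    ∃ x y, ρ'.π (E.innA (E.smulB x b) y) ≠ 0 := by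
  obtain ⟨y, z, hyz⟩ := E.exists_π_mul_innB_ne_zero ρ hb
  obtain ⟨h, hh⟩ := ContinuousLinearMap.exists_ne_zero hyz
  obtain ⟨x, hx⟩ := W.exists_t_ne_zero hρ hh
  refine ⟨x, y, fun h0 => hx ?_⟩
  simpa [W.π_innA_smulB] using congr($h0 (W.t z h))

lemma exists_π_innB_smulA_ne_zero (W : InducedRepWitness E ρ ρ') {a : A} (ha : ρ'.π a ≠ 0) :
    ∃ x y, ρ.π (E.innB y (E.smulA a x)) ≠ 0 := by
  have ⟨x, h, hxh⟩ : ∃ x h, ρ'.π a (W.t x h) ≠ 0 := by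
    by_contra! h
    exact ha (ContinuousLinearMap.ext_on (dense_iff_closure_eq.2 W.t_dense) (by
      rintro _ ⟨x, h', rfl⟩; simp [h]))
  obtain ⟨y, hy⟩ := W.exists_adjoint_tensorLeft_ne_zero hxh
  refine ⟨x, y, fun h0 => hy ?_⟩
  simpa [W.π_innB_smulA] using congr($h0 h)

end InducedRepWitness

end

theorem upperMult_inducedRep_general {A B : Type}
    [NonUnitalCStarAlgebra A] [NonUnitalCStarAlgebra B]
    (E : ImprimitivityBimodule A B)
    (Ind : IrrRep B → IrrRep A)
    (hInd : ∀ σ : IrrRep B, Nonempty (InducedRepWitness E σ.1 (Ind σ).1))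
    {ι : Type} [Preorder ι]
    (π : IrrRep B) (net : ι → IrrRep B) :
    upperMult π net = upperMult (Ind π) (fun α => Ind (net α)) := by
  have W σ : InducedRepWitness E σ.1 (Ind σ).1 := (hInd σ).some
  apply le_antisymm
  · refine upperMult_le_upperMult fun a ha => ?_
    obtain ⟨x, y, hxy⟩ := (W π).exists_π_innB_smulA_ne_zero ha
    refine ⟨_, hxy, fun α => ?_⟩
    rw [(W (net α)).π_innB_smulA]
    exact opRank_comp_comp_le _ _ _
  · refine upperMult_le_upperMult fun b hb => ?_
    obtain ⟨x, y, hxy⟩ := (W π).exists_π_innA_smulB_ne_zero π.2 hb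
    refine ⟨_, hxy, fun α => ?_⟩
    rw [(W (net α)).π_innA_smulB]
    exact opRank_comp_comp_le _ _ _

/-- Let `X` be an `A`–`B` imprimitivity bimodule, let `π ∈ B̂`, and let
`(π_α)` be a net in `B̂` with `π` as a cluster point.  If `Ind = X-Ind` assigns to each
element of `B̂` the induced element of `Â`, then
`M_U(π, (π_α)) = M_U(X-Ind π, (X-Ind π_α))`. -/
theorem upperMult_inducedRep {A B : Type}
    [NonUnitalCStarAlgebra A] [NonUnitalCStarAlgebra B]
    (E : ImprimitivityBimodule A B)
    (Ind : IrrRep B → IrrRep A)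
    (hInd : ∀ σ : IrrRep B, Nonempty (InducedRepWitness E σ.1 (Ind σ).1))
    {ι : Type} [Preorder ι] [IsDirected ι (· ≤ ·)] [Nonempty ι]
    (π : IrrRep B) (net : ι → IrrRep B)
    (hcluster : MapClusterPt π Filter.atTop net) :
    upperMult π net = upperMult (Ind π) (fun α => Ind (net α)) :=
  upperMult_inducedRep_general E Ind hInd π net
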